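/- arXiv:2302.03370 — 3 statements merged into one kernel-verified Lean document; each statement's English description precedes it below -/
import Mathlib

section
/- Let K be a bounded convex open set in ℝᵈ and u ∈ H¹(K) with ∫_K u dx = 0. Then ‖u‖_{L²(K)} ≤ C · (diam K)^{1+d/2} / |K|^{1/2} · ‖∇u‖_{L²(K)}, where C depends only on d. -/
/-!
For `x ∈ K` the mean-zero condition gives `|K| u x = ∫_K (u x - u y) dy`, so by Cauchy–Schwarz
`|K| |u x|² ≤ ∫_K |u x - u y|² dy`. Along the segment from `y` to `x`,
`|u x - u y|² ≤ (diam K)² ∫₀¹ |∇u ((1 - t) y + t x)|² dt`. After integrating over `x, y ∈ K` and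
moving the `t`-integral outside, for each `t` one of the substitutions `y ↦ (1 - t) y + t x` or
`x ↦ (1 - t) y + t x` scales volume by a factor at least `2⁻ᵈ`, whence
`∫_K u² ≤ 2ᵈ (diam K)² ∫_K |∇u|²`. Finally `|K| ≤ |B₁| (diam K)ᵈ` converts one factor `diam K`
into `(diam K)^(1 + d/2) |B₁|^(1/2) / |K|^(1/2)`.
-/

open MeasureTheory Set Module Metric
open scoped ENNReal

theorem sq_lintegral_le_lintegral_sq_mul_measure_univ {α : Type*} [MeasurableSpace α]
    (μ : Measure α) {f : α → ℝ≥0∞} (hf : AEMeasurable f μ) :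
    (∫⁻ a, f a ∂μ) ^ 2 ≤ (∫⁻ a, f a ^ 2 ∂μ) * μ univ := by
  have h := ENNReal.lintegral_mul_le_Lp_mul_Lq μ .two_two hf (aemeasurable_const (b := 1))
  simp only [Pi.mul_apply, mul_one, lintegral_const, one_pow, one_mul, ENNReal.rpow_two] at h
  calc (∫⁻ a, f a ∂μ) ^ 2
      ≤ ((∫⁻ a, f a ^ 2 ∂μ) ^ (1 / 2 : ℝ) * μ univ ^ (1 / 2 : ℝ)) ^ 2 := pow_le_pow_left' h 2
    _ = (∫⁻ a, f a ^ 2 ∂μ) * μ univ := by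
      rw [mul_pow, ← ENNReal.rpow_two, ← ENNReal.rpow_two, ← ENNReal.rpow_mul,
        ← ENNReal.rpow_mul]
      norm_num

theorem enorm_sq_mul_measure_le_lintegral_enorm_sub_sq {α F : Type*} [MeasurableSpace α]
    [NormedAddCommGroup F] [NormedSpace ℝ F] [CompleteSpace F] {μ : Measure α} {s : Set α}
    {u : α → F} (hs₀ : μ s ≠ 0) (hs : μ s ≠ ∞) (hu : IntegrableOn u s μ)
    (hmean : ∫ y in s, u y ∂μ = 0) (x : α) :
    ‖u x‖ₑ ^ 2 * μ s ≤ ∫⁻ y in s, ‖u x - u y‖ₑ ^ 2 ∂μ := by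
  have hint : ∫ y in s, (u x - u y) ∂μ = μ.real s • u x := by
    have hconst : IntegrableOn (fun _ ↦ u x) s μ := integrableOn_const hs
    rw [integral_sub hconst hu, hmean, sub_zero, setIntegral_const]
  have hL1 : ‖u x‖ₑ * μ s ≤ ∫⁻ y in s, ‖u x - u y‖ₑ ∂μ :=
    calc ‖u x‖ₑ * μ s = ‖∫ y in s, (u x - u y) ∂μ‖ₑ := by
          rw [hint, enorm_smul, Real.enorm_of_nonneg measureReal_nonneg, measureReal_def,
            ENNReal.ofReal_toReal hs, mul_comm]
      _ ≤ ∫⁻ y in s, ‖u x - u y‖ₑ ∂μ := enorm_integral_le_lintegral_enorm _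
  have hL2 := sq_lintegral_le_lintegral_sq_mul_measure_univ (μ.restrict s)
    (f := fun y ↦ ‖u x - u y‖ₑ) (aestronglyMeasurable_const.sub hu.aestronglyMeasurable).enorm
  rw [Measure.restrict_apply_univ] at hL2
  refine (ENNReal.mul_le_mul_iff_left hs₀ hs).1 ?_
  calc ‖u x‖ₑ ^ 2 * μ s * μ s = (‖u x‖ₑ * μ s) ^ 2 := by ring
    _ ≤ (∫⁻ y in s, ‖u x - u y‖ₑ ∂μ) ^ 2 := pow_le_pow_left' hL1 2
    _ ≤ (∫⁻ y in s, ‖u x - u y‖ₑ ^ 2 ∂μ) * μ s := hL2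

section Segment

variable {E F : Type*} [NormedAddCommGroup E] [NormedSpace ℝ E] [NormedAddCommGroup F]
  [NormedSpace ℝ F] {K : Set E} {u : E → F} {x y : E}

theorem Convex.continuousOn_fderiv_comp_segment (hK : IsOpen K) (hconv : Convex ℝ K)
    (hu : ContDiffOn ℝ 1 u K) (hx : x ∈ K) (hy : y ∈ K) :
    ContinuousOn (fun t : ℝ ↦ fderiv ℝ u ((1 - t) • y + t • x)) (Icc 0 1) :=
  (hu.continuousOn_fderiv_of_isOpen hK le_rfl).comp (by fun_prop)
    fun _ ht ↦ hconv hy hx (by linarith [ht.2]) ht.1 (by ring)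

theorem Convex.enorm_sub_le_lintegral_enorm_fderiv [CompleteSpace F] (hK : IsOpen K)
    (hconv : Convex ℝ K) (hu : ContDiffOn ℝ 1 u K) (hx : x ∈ K) (hy : y ∈ K) :
    ‖u x - u y‖ₑ ≤ ‖x - y‖ₑ * ∫⁻ t in Icc (0 : ℝ) 1, ‖fderiv ℝ u ((1 - t) • y + t • x)‖ₑ := by
  set γ : ℝ → E := ⇑(AffineMap.lineMap (k := ℝ) y x)
  have hγ : ∀ t, γ t = (1 - t) • y + t • x := AffineMap.lineMap_apply_module y x
  have hcont := hconv.continuousOn_fderiv_comp_segment hK hu hx hy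
  simp only [← hγ] at hcont ⊢
  have hderiv : ∀ t ∈ uIcc (0 : ℝ) 1, HasDerivAt (u ∘ γ) (fderiv ℝ u (γ t) (x - y)) t := by
    intro t ht
    rw [uIcc_of_le zero_le_one] at ht
    have hγt : γ t ∈ K := hconv.lineMap_mem hy hx ht
    exact ((hu.differentiableOn one_ne_zero).differentiableAt (hK.mem_nhds hγt)).hasFDerivAt
      |>.comp_hasDerivAt t AffineMap.hasDerivAt_lineMap
  have hftc : u x - u y = ∫ t in Ioc (0 : ℝ) 1, fderiv ℝ u (γ t) (x - y) := by
    rw [← intervalIntegral.integral_of_le zero_le_one,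
      intervalIntegral.integral_eq_sub_of_hasDerivAt hderiv
        ((hcont.clm_apply continuousOn_const).intervalIntegrable_of_Icc zero_le_one)]
    simp [γ]
  calc ‖u x - u y‖ₑ ≤ ∫⁻ t in Ioc (0 : ℝ) 1, ‖fderiv ℝ u (γ t) (x - y)‖ₑ :=
        hftc ▸ enorm_integral_le_lintegral_enorm _
    _ ≤ ∫⁻ t in Ioc (0 : ℝ) 1, ‖x - y‖ₑ * ‖fderiv ℝ u (γ t)‖ₑ :=
        lintegral_mono fun t ↦ ((fderiv ℝ u (γ t)).le_opENorm _).trans_eq (mul_comm _ _)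
    _ = ‖x - y‖ₑ * ∫⁻ t in Icc (0 : ℝ) 1, ‖fderiv ℝ u (γ t)‖ₑ := by
        rw [setLIntegral_congr Ioc_ae_eq_Icc, lintegral_const_mul' _ _ enorm_ne_top]

theorem Convex.enorm_sub_sq_le_lintegral_enorm_fderiv_sq [CompleteSpace F] (hK : IsOpen K)
    (hconv : Convex ℝ K) (hu : ContDiffOn ℝ 1 u K) (hx : x ∈ K) (hy : y ∈ K) :
    ‖u x - u y‖ₑ ^ 2 ≤
      ‖x - y‖ₑ ^ 2 * ∫⁻ t in Icc (0 : ℝ) 1, ‖fderiv ℝ u ((1 - t) • y + t • x)‖ₑ ^ 2 := by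
  have hcs := sq_lintegral_le_lintegral_sq_mul_measure_univ (volume.restrict (Icc (0 : ℝ) 1))
    ((hconv.continuousOn_fderiv_comp_segment hK hu hx hy).enorm.aemeasurable
      measurableSet_Icc)
  rw [Measure.restrict_apply_univ, Real.volume_Icc, sub_zero, ENNReal.ofReal_one, mul_one] at hcs
  calc ‖u x - u y‖ₑ ^ 2
      ≤ (‖x - y‖ₑ * ∫⁻ t in Icc (0 : ℝ) 1, ‖fderiv ℝ u ((1 - t) • y + t • x)‖ₑ) ^ 2 :=
        pow_le_pow_left' (hconv.enorm_sub_le_lintegral_enorm_fderiv hK hu hx hy) 2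
    _ ≤ _ := by rw [mul_pow]; gcongr

end Segment

section Haar

variable {E : Type*} [NormedAddCommGroup E] [NormedSpace ℝ E] [FiniteDimensional ℝ E]
  [MeasurableSpace E] [BorelSpace E] (μ : Measure E) [μ.IsAddHaarMeasure]

theorem lintegral_comp_smul_add (G : E → ℝ≥0∞) {a : ℝ} (ha : a ≠ 0) (c : E) :
    ∫⁻ y, G (a • y + c) ∂μ = ENNReal.ofReal |(a ^ finrank ℝ E)⁻¹| * ∫⁻ z, G z ∂μ := by
  let e : E ≃ᵐ E := (Homeomorph.smul (isUnit_iff_ne_zero.2 ha).unit).toMeasurableEquiv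
  calc ∫⁻ y, G (a • y + c) ∂μ = ∫⁻ z, G (z + c) ∂Measure.map (a • ·) μ :=
        (lintegral_map_equiv (fun z ↦ G (z + c)) e).symm
    _ = _ := by
        rw [Measure.map_addHaar_smul μ ha, lintegral_smul_measure,
          lintegral_add_right_eq_self G c, smul_eq_mul]

theorem lintegral_comp_smul_add_le_of_half_le (G : E → ℝ≥0∞) {a : ℝ} (ha : 2⁻¹ ≤ a) (c : E) :
    ∫⁻ y, G (a • y + c) ∂μ ≤ 2 ^ finrank ℝ E * ∫⁻ z, G z ∂μ := by
  have ha₀ : 0 < a := lt_of_lt_of_le (by norm_num) ha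
  rw [lintegral_comp_smul_add μ G ha₀.ne', abs_of_pos (by positivity), ← inv_pow]
  gcongr
  calc ENNReal.ofReal (a⁻¹ ^ finrank ℝ E) ≤ ENNReal.ofReal (2 ^ finrank ℝ E) := by
        gcongr
        exact inv_le_of_inv_le₀ (by norm_num) ha
    _ = 2 ^ finrank ℝ E := by rw [ENNReal.ofReal_pow zero_le_two, ENNReal.ofReal_ofNat]

variable {G : E → ℝ≥0∞}

theorem setLIntegral_setLIntegral_comp_smul_add_smul_le (hG : Measurable G) (s : Set E) (t : ℝ) :
    ∫⁻ x in s, ∫⁻ y in s, G ((1 - t) • y + t • x) ∂μ ∂μ ≤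
      2 ^ finrank ℝ E * μ s * ∫⁻ z, G z ∂μ := by
  rcases le_total t 2⁻¹ with hle | hge
  · calc ∫⁻ x in s, ∫⁻ y in s, G ((1 - t) • y + t • x) ∂μ ∂μ
        ≤ ∫⁻ _ in s, 2 ^ finrank ℝ E * ∫⁻ z, G z ∂μ ∂μ := by
          refine lintegral_mono fun x ↦ (setLIntegral_le_lintegral _ _).trans ?_
          exact lintegral_comp_smul_add_le_of_half_le μ G (by linarith) _
      _ = _ := by rw [setLIntegral_const]; ring
  · have hmeas : Measurable (Function.uncurry fun x y : E ↦ G ((1 - t) • y + t • x)) :=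
      hG.comp (by fun_prop : Continuous fun p : E × E ↦ (1 - t) • p.2 + t • p.1).measurable
    rw [lintegral_lintegral_swap hmeas.aemeasurable]
    calc ∫⁻ y in s, ∫⁻ x in s, G ((1 - t) • y + t • x) ∂μ ∂μ
        ≤ ∫⁻ _ in s, 2 ^ finrank ℝ E * ∫⁻ z, G z ∂μ ∂μ := by
          refine lintegral_mono fun y ↦ (setLIntegral_le_lintegral _ _).trans ?_
          simp_rw [add_comm ((1 - t) • y)]
          exact lintegral_comp_smul_add_le_of_half_le μ G hge _
      _ = _ := by rw [setLIntegral_const]; ring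

theorem setLIntegral_setLIntegral_lintegral_segment_le (hG : Measurable G) (s : Set E) :
    ∫⁻ x in s, ∫⁻ y in s, (∫⁻ t in Icc (0 : ℝ) 1, G ((1 - t) • y + t • x)) ∂μ ∂μ ≤
      2 ^ finrank ℝ E * μ s * ∫⁻ z, G z ∂μ := by
  have hmeas : Measurable fun p : (E × ℝ) × E ↦ G ((1 - p.1.2) • p.2 + p.1.2 • p.1.1) :=
    hG.comp (by fun_prop)
  have hswap_inner : ∀ x, ∫⁻ y in s, (∫⁻ t in Icc (0 : ℝ) 1, G ((1 - t) • y + t • x)) ∂μ =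
      ∫⁻ t in Icc (0 : ℝ) 1, ∫⁻ y in s, G ((1 - t) • y + t • x) ∂μ := fun x ↦
    lintegral_lintegral_swap ((hmeas.comp (by fun_prop : Measurable fun p : E × ℝ ↦
      ((x, p.2), p.1))).aemeasurable (μ := (μ.restrict s).prod (volume.restrict (Icc 0 1))))
  simp_rw [hswap_inner]
  rw [lintegral_lintegral_swap (hmeas.lintegral_prod_right' (ν := μ.restrict s)).aemeasurable]
  calc ∫⁻ t in Icc (0 : ℝ) 1, ∫⁻ x in s, ∫⁻ y in s, G ((1 - t) • y + t • x) ∂μ ∂μ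
      ≤ ∫⁻ _ in Icc (0 : ℝ) 1, 2 ^ finrank ℝ E * μ s * ∫⁻ z, G z ∂μ :=
        lintegral_mono fun t ↦ setLIntegral_setLIntegral_comp_smul_add_smul_le μ hG s t
    _ = _ := by rw [setLIntegral_const, Real.volume_Icc, sub_zero, ENNReal.ofReal_one, mul_one]

theorem Bornology.IsBounded.measure_le_ofReal_diam_pow_mul {s : Set E}
    (hs : Bornology.IsBounded s) :
    μ s ≤ ENNReal.ofReal (diam s ^ finrank ℝ E) * μ (closedBall 0 1) := by
  rcases s.eq_empty_or_nonempty with rfl | ⟨x, hx⟩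
  · simp
  calc μ s ≤ μ (closedBall x (diam s)) :=
        measure_mono fun z hz ↦ mem_closedBall.2 (dist_le_diam_of_mem hs hz hx)
    _ = _ := Measure.addHaar_closedBall' μ x diam_nonneg

variable {μ} {F : Type*} [NormedAddCommGroup F] [NormedSpace ℝ F] [CompleteSpace F] {K : Set E}
  {u : E → F}

theorem Convex.lintegral_enorm_sq_le_of_integral_eq_zero (hK : IsOpen K) (hconv : Convex ℝ K)
    (hKb : Bornology.IsBounded K) (hK₀ : μ K ≠ 0) (hu : ContDiffOn ℝ 1 u K)
    (hint : IntegrableOn u K μ) (hmean : ∫ x in K, u x ∂μ = 0) :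
    ∫⁻ x in K, ‖u x‖ₑ ^ 2 ∂μ ≤
      2 ^ finrank ℝ E * ediam K ^ 2 * ∫⁻ x in K, ‖fderiv ℝ u x‖ₑ ^ 2 ∂μ := by
  have hK₁ : μ K ≠ ∞ := hKb.measure_lt_top.ne
  have hdiam : ediam K ^ 2 ≠ ∞ := ENNReal.pow_ne_top hKb.ediam_ne_top
  -- Extending by zero lets the change of variables along segments run over all of `E`.
  set G : E → ℝ≥0∞ := K.indicator fun z ↦ ‖fderiv ℝ u z‖ₑ ^ 2
  have hG : Measurable G :=
    ((measurable_fderiv ℝ u).enorm.pow_const 2).indicator hK.measurableSet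
  have hpair : ∀ x ∈ K, ∀ y ∈ K, ‖u x - u y‖ₑ ^ 2 ≤
      ediam K ^ 2 * ∫⁻ t in Icc (0 : ℝ) 1, G ((1 - t) • y + t • x) := by
    intro x hx y hy
    have hseg : EqOn (fun t : ℝ ↦ G ((1 - t) • y + t • x))
        (fun t ↦ ‖fderiv ℝ u ((1 - t) • y + t • x)‖ₑ ^ 2) (Icc 0 1) := fun t ht ↦
      indicator_of_mem (hconv hy hx (by linarith [ht.2]) ht.1 (by ring)) _
    rw [setLIntegral_congr_fun measurableSet_Icc hseg]
    refine (hconv.enorm_sub_sq_le_lintegral_enorm_fderiv_sq hK hu hx hy).trans ?_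
    gcongr
    rw [← edist_eq_enorm_sub]
    exact edist_le_ediam_of_mem hx hy
  refine (ENNReal.mul_le_mul_iff_left hK₀ hK₁).1 ?_
  calc (∫⁻ x in K, ‖u x‖ₑ ^ 2 ∂μ) * μ K
      = ∫⁻ x in K, ‖u x‖ₑ ^ 2 * μ K ∂μ := (lintegral_mul_const' _ _ hK₁).symm
    _ ≤ ∫⁻ x in K, ∫⁻ y in K, ‖u x - u y‖ₑ ^ 2 ∂μ ∂μ :=
        lintegral_mono fun x ↦ enorm_sq_mul_measure_le_lintegral_enorm_sub_sq hK₀ hK₁ hint hmean x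
    _ ≤ ∫⁻ x in K, ∫⁻ y in K,
          ediam K ^ 2 * (∫⁻ t in Icc (0 : ℝ) 1, G ((1 - t) • y + t • x)) ∂μ ∂μ :=
        setLIntegral_mono' hK.measurableSet fun x hx ↦
          setLIntegral_mono' hK.measurableSet fun y hy ↦ hpair x hx y hy
    _ = ediam K ^ 2 *
          ∫⁻ x in K, ∫⁻ y in K, (∫⁻ t in Icc (0 : ℝ) 1, G ((1 - t) • y + t • x)) ∂μ ∂μ := by
        simp_rw [lintegral_const_mul' _ _ hdiam]
    _ ≤ ediam K ^ 2 * (2 ^ finrank ℝ E * μ K * ∫⁻ z, G z ∂μ) := by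
        gcongr
        exact setLIntegral_setLIntegral_lintegral_segment_le μ hG K
    _ = 2 ^ finrank ℝ E * ediam K ^ 2 * (∫⁻ x in K, ‖fderiv ℝ u x‖ₑ ^ 2 ∂μ) * μ K := by
        rw [lintegral_indicator hK.measurableSet]
        ring

theorem Convex.integral_norm_sq_le_of_integral_eq_zero (hK : IsOpen K) (hconv : Convex ℝ K)
    (hKb : Bornology.IsBounded K) (hK₀ : μ K ≠ 0) (hu : ContDiffOn ℝ 1 u K)
    (hint : IntegrableOn u K μ)
    (hgrad : IntegrableOn (fun x ↦ ‖fderiv ℝ u x‖ ^ 2) K μ) (hmean : ∫ x in K, u x ∂μ = 0) :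
    ∫ x in K, ‖u x‖ ^ 2 ∂μ ≤ 2 ^ finrank ℝ E * diam K ^ 2 * ∫ x in K, ‖fderiv ℝ u x‖ ^ 2 ∂μ := by
  have hbound := hconv.lintegral_enorm_sq_le_of_integral_eq_zero hK hKb hK₀ hu hint hmean
  have hgrad_fin : ∫⁻ x in K, ‖fderiv ℝ u x‖ₑ ^ 2 ∂μ ≠ ∞ := by
    simpa only [ENNReal.ofReal_pow (norm_nonneg _), ofReal_norm] using hgrad.lintegral_lt_top.ne
  rw [integral_eq_lintegral_of_nonneg_ae (f := fun x ↦ ‖u x‖ ^ 2)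
      (ae_of_all _ fun _ ↦ by positivity) (hint.aestronglyMeasurable.norm.pow 2),
    integral_eq_lintegral_of_nonneg_ae (ae_of_all _ fun _ ↦ by positivity)
      hgrad.aestronglyMeasurable]
  simp only [ENNReal.ofReal_pow (norm_nonneg _), ofReal_norm]
  refine (ENNReal.toReal_mono ?_ hbound).trans_eq ?_
  · exact ENNReal.mul_ne_top (ENNReal.mul_ne_top (by simp) (by simp [hKb.ediam_ne_top]))
      hgrad_fin
  · simp [diam]

end Haar

theorem le_rpow_mul_sqrt_div_sqrt {D m V : ℝ} (d : ℕ) (hD : 0 ≤ D) (hm : 0 < m)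
    (hmV : m ≤ D ^ d * V) : D ≤ D ^ (1 + d / 2 : ℝ) * √V / √m := by
  have hpow : D ^ (1 + d / 2 : ℝ) = D * √(D ^ d) := by
    rw [Real.rpow_add' hD (by positivity), Real.rpow_one, Real.sqrt_eq_rpow,
      ← Real.rpow_natCast, ← Real.rpow_mul hD, mul_one_div]
  rw [le_div_iff₀ (Real.sqrt_pos.2 hm), hpow, mul_assoc, ← Real.sqrt_mul (by positivity)]
  gcongr

theorem poincare_friedrichs_convex (d : ℕ) :
    ∃ C : ℝ, 0 < C ∧
      ∀ (K : Set (EuclideanSpace ℝ (Fin d))) (u : EuclideanSpace ℝ (Fin d) → ℝ),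
        IsOpen K → Convex ℝ K → Bornology.IsBounded K → 0 < volume K →
        ContDiffOn ℝ 1 u K →
        IntegrableOn u K volume →
        IntegrableOn (fun x => (u x) ^ 2) K volume →
        IntegrableOn (fun x => ‖fderiv ℝ u x‖ ^ 2) K volume →
        (∫ x in K, u x) = 0 →
        Real.sqrt (∫ x in K, (u x) ^ 2) ≤
          C * (Metric.diam K) ^ ((1 : ℝ) + d / 2) / Real.sqrt ((volume K).toReal) *
            Real.sqrt (∫ x in K, ‖fderiv ℝ u x‖ ^ 2) := by
  set V := (volume (closedBall (0 : EuclideanSpace ℝ (Fin d)) 1)).toReal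
  have hV : 0 < V := ENNReal.toReal_pos (measure_closedBall_pos volume 0 one_pos).ne'
    measure_closedBall_lt_top.ne
  refine ⟨√(2 ^ d * V), by positivity, fun K u hK hconv hKb hK₀ hu hint _ hgrad hmean ↦ ?_⟩
  have hpoincare :=
    hconv.integral_norm_sq_le_of_integral_eq_zero hK hKb hK₀.ne' hu hint hgrad hmean
  simp only [Real.norm_eq_abs, sq_abs, finrank_euclideanSpace_fin] at hpoincare
  have hvol : (volume K).toReal ≤ diam K ^ d * V := by
    have hball := hKb.measure_le_ofReal_diam_pow_mul volume
    rw [finrank_euclideanSpace_fin] at hball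
    simpa [ENNReal.toReal_mul, diam_nonneg] using ENNReal.toReal_mono
      (ENNReal.mul_ne_top ENNReal.ofReal_ne_top measure_closedBall_lt_top.ne) hball
  have hm : 0 < (volume K).toReal := ENNReal.toReal_pos hK₀.ne' hKb.measure_lt_top.ne
  calc √(∫ x in K, u x ^ 2)
      ≤ √(2 ^ d) * diam K * √(∫ x in K, ‖fderiv ℝ u x‖ ^ 2) := by
        rw [← Real.sqrt_sq diam_nonneg, ← Real.sqrt_mul (by positivity),
          ← Real.sqrt_mul (by positivity)]
        exact Real.sqrt_le_sqrt hpoincare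
    _ ≤ √(2 ^ d) * (diam K ^ (1 + d / 2 : ℝ) * √V / √(volume K).toReal) *
          √(∫ x in K, ‖fderiv ℝ u x‖ ^ 2) := by
        gcongr
        exact le_rpow_mul_sqrt_div_sqrt d diam_nonneg hm hvol
    _ = √(2 ^ d * V) * diam K ^ (1 + d / 2 : ℝ) / √(volume K).toReal *
          √(∫ x in K, ‖fderiv ℝ u x‖ ^ 2) := by
        rw [Real.sqrt_mul (by positivity)]
        ring
end

section
/- Let a < b and let u : [a,b] → ℝ be continuously differentiable with ∫_a^b u = 0. Then ‖u‖_{L²(a,b)} ≤ (b - a) ‖u'‖_{L²(a,b)}. -/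
/-!
A continuous function with zero mean vanishes at some `c ∈ [a, b]`, so by the fundamental
theorem of calculus `|u x| = |u x - u c| ≤ ∫ₐᵇ |u'|` for every `x`. Cauchy–Schwarz bounds
the square of the right-hand side by `(b - a) ∫ₐᵇ u'²`, and integrating the resulting
pointwise bound on `u x ^ 2` over `[a, b]` contributes the second factor `b - a`.
-/

open Set MeasureTheory

theorem sq_integral_le_measureReal_mul_integral_sq {α : Type*} [MeasurableSpace α]
    {μ : Measure α} [IsFiniteMeasure μ] {f : α → ℝ} (hf : Integrable f μ)
    (hf2 : Integrable (fun x ↦ f x ^ 2) μ) :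
    (∫ x, f x ∂μ) ^ 2 ≤ μ.real univ * ∫ x, f x ^ 2 ∂μ := by
  set L := μ.real univ
  set I := ∫ x, f x ∂μ
  rcases (measureReal_nonneg : 0 ≤ L).eq_or_lt with hL | hL
  · have hμ : μ = 0 := Measure.measure_univ_eq_zero.mp
      ((measureReal_eq_zero_iff (measure_ne_top μ univ)).mp hL.symm)
    simp [I, hμ]
  -- `L * f - I` is `L` times `f` minus its mean.
  have hexpand : ∫ x, (L * f x - I) ^ 2 ∂μ = L * (L * ∫ x, f x ^ 2 ∂μ - I ^ 2) := by
    have hpoint : (fun x ↦ (L * f x - I) ^ 2) =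
        fun x ↦ L ^ 2 * f x ^ 2 - 2 * L * I * f x + I ^ 2 := by
      ext x; ring
    have hquad : Integrable (fun x ↦ L ^ 2 * f x ^ 2 - 2 * L * I * f x) μ :=
      (hf2.const_mul _).sub (hf.const_mul _)
    rw [hpoint, integral_add hquad (integrable_const _),
      integral_sub (hf2.const_mul _) (hf.const_mul _), integral_const_mul, integral_const_mul,
      integral_const, smul_eq_mul]
    ring
  have hnonneg : 0 ≤ ∫ x, (L * f x - I) ^ 2 ∂μ := integral_nonneg fun x ↦ sq_nonneg _
  rw [hexpand] at hnonneg
  nlinarith [(mul_nonneg_iff_of_pos_left hL).mp hnonneg]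

theorem sq_intervalIntegral_le_mul_intervalIntegral_sq {a b : ℝ} {f : ℝ → ℝ} (hab : a ≤ b)
    (hf : IntervalIntegrable f volume a b)
    (hf2 : IntervalIntegrable (fun x ↦ f x ^ 2) volume a b) :
    (∫ x in a..b, f x) ^ 2 ≤ (b - a) * ∫ x in a..b, f x ^ 2 := by
  have := sq_integral_le_measureReal_mul_integral_sq
    ((intervalIntegrable_iff_integrableOn_Ioc_of_le hab).mp hf)
    ((intervalIntegrable_iff_integrableOn_Ioc_of_le hab).mp hf2)
  rwa [measureReal_restrict_apply_univ, Real.volume_real_Ioc_of_le hab,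
    ← intervalIntegral.integral_of_le hab, ← intervalIntegral.integral_of_le hab] at this

theorem exists_eq_zero_of_intervalIntegral_eq_zero {a b : ℝ} {f : ℝ → ℝ} (hab : a < b)
    (hf : ContinuousOn f (Icc a b)) (h : ∫ x in a..b, f x = 0) : ∃ c ∈ Icc a b, f c = 0 := by
  by_contra! hne
  have hfi : IntervalIntegrable f volume a b := hf.intervalIntegrable_of_Icc hab.le
  rcases isPreconnected_Icc.mapsTo_Ioi_or_Iio hf hne with hpos | hneg
  · have := intervalIntegral.intervalIntegral_pos_of_pos_on hfi
      (fun x hx ↦ hpos (Ioo_subset_Icc_self hx)) hab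
    linarith
  · have := intervalIntegral.intervalIntegral_pos_of_pos_on (f := fun x ↦ -f x) hfi.neg
      (fun x hx ↦ neg_pos.mpr (hneg (Ioo_subset_Icc_self hx))) hab
    rw [intervalIntegral.integral_neg] at this
    linarith

section

variable {a b : ℝ} {u : ℝ → ℝ}

theorem intervalIntegral_derivWithin_Icc_eq_sub (hab : a < b) (hu : ContDiffOn ℝ 1 u (Icc a b))
    {c x : ℝ} (hc : c ∈ Icc a b) (hx : x ∈ Icc a b) :
    ∫ t in c..x, derivWithin u (Icc a b) t = u x - u c := by
  have hsub : uIcc c x ⊆ Icc a b := uIcc_subset_Icc hc hx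
  refine intervalIntegral.integral_eq_sub_of_hasDeriv_right (hu.continuousOn.mono hsub)
    (fun t ht ↦ ?_) ((hu.continuousOn_derivWithin (uniqueDiffOn_Icc hab) le_rfl).mono hsub
      |>.intervalIntegrable)
  have ht' : t ∈ Ioo a b :=
    ⟨(le_min hc.1 hx.1).trans_lt ht.1, ht.2.trans_le (max_le hc.2 hx.2)⟩
  have hderiv : HasDerivWithinAt u (derivWithin u (Icc a b) t) (Icc a b) t :=
    (hu.differentiableOn one_ne_zero t (Ioo_subset_Icc_self ht')).hasDerivWithinAt
  exact (hderiv.hasDerivAt (Icc_mem_nhds ht'.1 ht'.2)).hasDerivWithinAt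

theorem abs_sub_le_intervalIntegral_abs_derivWithin (hab : a < b)
    (hu : ContDiffOn ℝ 1 u (Icc a b)) {c x : ℝ} (hc : c ∈ Icc a b) (hx : x ∈ Icc a b) :
    |u x - u c| ≤ ∫ t in a..b, |derivWithin u (Icc a b) t| := by
  have hcont : ContinuousOn (fun t ↦ |derivWithin u (Icc a b) t|) (Icc a b) :=
    (hu.continuousOn_derivWithin (uniqueDiffOn_Icc hab) le_rfl).abs
  rw [← intervalIntegral_derivWithin_Icc_eq_sub hab hu hc hx,
    intervalIntegral.integral_of_le hab.le]
  calc |∫ t in c..x, derivWithin u (Icc a b) t|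
      ≤ ∫ t in uIoc c x, |derivWithin u (Icc a b) t| := by
        simpa only [Real.norm_eq_abs] using intervalIntegral.norm_integral_le_integral_norm_uIoc
          (f := derivWithin u (Icc a b)) (μ := volume)
    _ ≤ ∫ t in Ioc a b, |derivWithin u (Icc a b) t| :=
        setIntegral_mono_set (hcont.integrableOn_Icc.mono_set Ioc_subset_Icc_self)
          (Filter.Eventually.of_forall fun t ↦ abs_nonneg _)
          (Filter.Eventually.of_forall (Ioc_subset_Ioc (le_min hc.1 hx.1) (max_le hc.2 hx.2)))

theorem intervalIntegral_sq_le_of_intervalIntegral_eq_zero (hab : a < b)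
    (hu : ContDiffOn ℝ 1 u (Icc a b)) (hmean : ∫ x in a..b, u x = 0) :
    ∫ x in a..b, u x ^ 2 ≤ (b - a) ^ 2 * ∫ x in a..b, derivWithin u (Icc a b) x ^ 2 := by
  set u' := derivWithin u (Icc a b)
  have hu'cont : ContinuousOn u' (Icc a b) :=
    hu.continuousOn_derivWithin (uniqueDiffOn_Icc hab) le_rfl
  obtain ⟨c, hc, huc⟩ := exists_eq_zero_of_intervalIntegral_eq_zero hab hu.continuousOn hmean
  have hpointwise : ∀ x ∈ Icc a b, u x ^ 2 ≤ (b - a) * ∫ t in a..b, u' t ^ 2 := by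
    intro x hx
    have hsq : (∫ t in a..b, |u' t|) ^ 2 ≤ (b - a) * ∫ t in a..b, |u' t| ^ 2 :=
      sq_intervalIntegral_le_mul_intervalIntegral_sq hab.le
        (hu'cont.abs.intervalIntegrable_of_Icc hab.le)
        ((hu'cont.abs.pow 2).intervalIntegrable_of_Icc hab.le)
    simp only [sq_abs] at hsq
    calc u x ^ 2 = |u x - u c| ^ 2 := by rw [huc, sub_zero, sq_abs]
      _ ≤ (∫ t in a..b, |u' t|) ^ 2 := pow_le_pow_left₀ (abs_nonneg _)
          (abs_sub_le_intervalIntegral_abs_derivWithin hab hu hc hx) 2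
      _ ≤ (b - a) * ∫ t in a..b, u' t ^ 2 := hsq
  calc ∫ x in a..b, u x ^ 2 ≤ ∫ _ in a..b, (b - a) * ∫ t in a..b, u' t ^ 2 :=
        intervalIntegral.integral_mono_on hab.le
          ((hu.continuousOn.pow 2).intervalIntegrable_of_Icc hab.le) intervalIntegrable_const
          hpointwise
    _ = (b - a) ^ 2 * ∫ t in a..b, u' t ^ 2 := by
        rw [intervalIntegral.integral_const, smul_eq_mul, ← mul_assoc, ← sq]

end

theorem poincare_wirtinger_1d (a b : ℝ) (hab : a < b) (u : ℝ → ℝ)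
    (hu : ContDiffOn ℝ 1 u (Set.Icc a b))
    (hmean : (∫ x in a..b, u x) = 0) :
    Real.sqrt (∫ x in a..b, (u x) ^ 2) ≤
      (b - a) * Real.sqrt (∫ x in a..b, (derivWithin u (Set.Icc a b) x) ^ 2) := by
  calc Real.sqrt (∫ x in a..b, (u x) ^ 2)
      ≤ Real.sqrt ((b - a) ^ 2 * ∫ x in a..b, (derivWithin u (Set.Icc a b) x) ^ 2) :=
        Real.sqrt_le_sqrt (intervalIntegral_sq_le_of_intervalIntegral_eq_zero hab hu hmean)
    _ = (b - a) * Real.sqrt (∫ x in a..b, (derivWithin u (Set.Icc a b) x) ^ 2) := by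
        rw [Real.sqrt_mul (sq_nonneg _), Real.sqrt_sq (sub_nonneg.mpr hab.le)]
end

section
/- Let K = (0,h) ⊂ ℝ and let v be a polynomial of degree at most r on K. Then ‖v'‖_{L²(K)} ≤ C r² / h · ‖v‖_{L²(K)} for a constant C independent of r and h. -/
/-!
Expand `p` in the shifted Legendre polynomials `Pₙ`, which are orthogonal in `L²(0,1)` with
`‖Pₙ‖² = 1 / (2n + 1)`. Since `Pₙ ⊥ P_m''` for `m ≤ n`, integration by parts leaves only
boundary terms in `⟪Pₙ', P_m'⟫`, and these are at most `2r(r + 1)` because `|Pₙ| = 1` and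
`|P_m'| = m(m + 1)` at `0` and `1`. Cauchy–Schwarz on the coefficients gives
`‖p'‖² ≤ 2r(r + 1)²(2r + 1) ‖p‖²` on `(0,1)`, and rescaling `(0,h)` to `(0,1)` gives `1 / h`.
-/

open Polynomial Finset intervalIntegral
open scoped Nat

namespace Polynomial

theorem integral_derivative_mul_eq (p q : ℝ[X]) (a b : ℝ) :
    ∫ x in a..b, (derivative p).eval x * q.eval x =
      p.eval b * q.eval b - p.eval a * q.eval a -
        ∫ x in a..b, p.eval x * (derivative q).eval x := by
  have := integral_mul_deriv_eq_deriv_mul (fun x _ ↦ q.hasDerivAt x) (fun x _ ↦ p.hasDerivAt x)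
    ((derivative q).continuous.intervalIntegrable a b)
    ((derivative p).continuous.intervalIntegrable a b)
  simp only [mul_comm (q.eval _), mul_comm ((derivative q).eval _)] at this
  exact this

theorem integral_iterate_derivative_mul_eq {u : ℝ[X]} {a b : ℝ} {n : ℕ}
    (ha : ∀ k < n, (derivative^[k] u).IsRoot a) (hb : ∀ k < n, (derivative^[k] u).IsRoot b)
    (f : ℝ[X]) :
    ∫ x in a..b, (derivative^[n] u).eval x * f.eval x =
      (-1) ^ n * ∫ x in a..b, u.eval x * (derivative^[n] f).eval x := by
  induction n generalizing u with
  | zero => simp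
  | succ n ih =>
    have hua : u.eval a = 0 := ha 0 n.succ_pos
    have hub : u.eval b = 0 := hb 0 n.succ_pos
    rw [Function.iterate_succ_apply, ih (fun k hk ↦ ha (k + 1) (by omega))
      (fun k hk ↦ hb (k + 1) (by omega)), integral_derivative_mul_eq, hua, hub,
      Function.iterate_succ_apply']
    ring

theorem isRoot_iterate_derivative_of_pow_dvd {R : Type*} [CommRing R] {u : R[X]} {a : R}
    {n k : ℕ} (hu : (X - C a) ^ n ∣ u) (hk : k < n) : (derivative^[k] u).IsRoot a :=
  dvd_iff_isRoot.mp <| (dvd_pow_self _ (by omega)).trans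
    (pow_sub_dvd_iterate_derivative_of_pow_dvd k hu)

theorem degree_X_mul_derivative_sub_lt {R : Type*} [CommRing R] {p : R[X]} {n : ℕ}
    (hp : p.natDegree ≤ n) : (X * derivative p - C (n : R) * p).degree < (n : WithBot ℕ) := by
  rw [degree_lt_iff_coeff_zero]
  intro m hm
  rcases m with _ | m
  · simp [show n = 0 by omega]
  · rw [coeff_sub, coeff_X_mul, coeff_derivative, coeff_C_mul]
    rcases hm.eq_or_lt with rfl | hlt
    · push_cast; ring
    · simp [coeff_eq_zero_of_natDegree_lt (hp.trans_lt hlt)]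

noncomputable def l2Inner : LinearMap.BilinForm ℝ ℝ[X] :=
  LinearMap.mk₂ ℝ (fun p q ↦ ∫ x in (0 : ℝ)..1, p.eval x * q.eval x)
    (fun p₁ p₂ q ↦ by
      simp only [eval_add, add_mul]
      exact integral_add ((p₁.continuous.mul q.continuous).intervalIntegrable 0 1)
        ((p₂.continuous.mul q.continuous).intervalIntegrable 0 1))
    (fun c p q ↦ by
      simp only [eval_smul, smul_eq_mul, mul_assoc, intervalIntegral.integral_const_mul])
    (fun p q₁ q₂ ↦ by
      simp only [eval_add, mul_add]
      exact integral_add ((p.continuous.mul q₁.continuous).intervalIntegrable 0 1)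
        ((p.continuous.mul q₂.continuous).intervalIntegrable 0 1))
    (fun c p q ↦ by
      simp only [eval_smul, smul_eq_mul, mul_left_comm _ c, intervalIntegral.integral_const_mul])

theorem l2Inner_apply (p q : ℝ[X]) :
    l2Inner p q = ∫ x in (0 : ℝ)..1, p.eval x * q.eval x := rfl

theorem l2Inner_comm (p q : ℝ[X]) : l2Inner p q = l2Inner q p := by
  simp only [l2Inner_apply, mul_comm]

theorem l2Inner_mul_left_eq_mul_right (s p q : ℝ[X]) : l2Inner (s * p) q = l2Inner p (s * q) := by
  simp only [l2Inner_apply, eval_mul]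
  congr 1 with x
  ring

theorem l2Inner_derivative_left (p q : ℝ[X]) :
    l2Inner (derivative p) q =
      p.eval 1 * q.eval 1 - p.eval 0 * q.eval 0 - l2Inner p (derivative q) :=
  integral_derivative_mul_eq p q 0 1

theorem l2Inner_sum_smul_sum_smul (s : Finset ℕ) (a b : ℕ → ℝ) (f g : ℕ → ℝ[X]) :
    l2Inner (∑ i ∈ s, a i • f i) (∑ j ∈ s, b j • g j) =
      ∑ i ∈ s, ∑ j ∈ s, a i * b j * l2Inner (f i) (g j) := by
  simp only [map_sum, LinearMap.sum_apply, map_smul, LinearMap.smul_apply, smul_eq_mul,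
    Finset.mul_sum, mul_assoc]
  rw [Finset.sum_comm]
  simp only [mul_left_comm (b _)]

noncomputable def legendre (n : ℕ) : ℝ[X] := (shiftedLegendre n).map (algebraMap ℤ ℝ)

theorem degree_legendre (n : ℕ) : (legendre n).degree = n := by
  rw [legendre, degree_map_eq_of_injective (RingHom.injective_int _), degree_shiftedLegendre]

theorem natDegree_legendre (n : ℕ) : (legendre n).natDegree = n :=
  natDegree_eq_of_degree_eq_some (degree_legendre n)

theorem legendre_ne_zero (n : ℕ) : legendre n ≠ 0 := by
  simp [← degree_eq_bot, degree_legendre]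

theorem legendre_eq_rodrigues (n : ℕ) :
    legendre n = (n ! : ℝ)⁻¹ • derivative^[n] (X ^ n * (1 - X) ^ n) := by
  have h := congrArg (map (algebraMap ℤ ℝ)) (factorial_mul_shiftedLegendre_eq n)
  simp only [Polynomial.map_mul, Polynomial.map_natCast, ← iterate_derivative_map,
    Polynomial.map_pow, Polynomial.map_sub, map_X, Polynomial.map_one] at h
  rw [← h, legendre, ← C_eq_natCast, ← smul_eq_C_mul, smul_smul,
    inv_mul_cancel₀ (by positivity), one_smul]

theorem legendre_comp_one_sub_X (n : ℕ) :
    (-1) ^ n * (legendre n).comp (1 - X) = legendre n := by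
  simpa [legendre, map_comp] using
    congrArg (map (algebraMap ℤ ℝ)) (neg_one_pow_mul_shiftedLegendre_comp_one_sub_X_eq n)

theorem legendre_eval_zero (n : ℕ) : (legendre n).eval 0 = 1 := by
  simp [← coeff_zero_eq_eval_zero, legendre, coeff_shiftedLegendre]

theorem legendre_eval_one (n : ℕ) : (legendre n).eval 1 = (-1) ^ n := by
  have h := congrArg (eval 1) (legendre_comp_one_sub_X n)
  simpa [eval_comp, legendre_eval_zero] using h.symm

theorem derivative_legendre_eval_zero (n : ℕ) :
    (derivative (legendre n)).eval 0 = -(n * (n + 1)) := by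
  simp [← coeff_zero_eq_eval_zero, coeff_derivative, legendre, coeff_shiftedLegendre]

theorem derivative_legendre_eval_one (n : ℕ) :
    (derivative (legendre n)).eval 1 = (-1) ^ n * (n * (n + 1)) := by
  have h := congrArg (fun p ↦ (derivative p).eval 1) (legendre_comp_one_sub_X n)
  simp [derivative_comp, eval_comp, derivative_legendre_eval_zero, derivative_pow] at h
  exact h.symm

theorem l2Inner_legendre_of_degree_lt {n : ℕ} {f : ℝ[X]} (hf : f.degree < n) :
    l2Inner (legendre n) f = 0 := by
  have h0 : ∀ k < n, (derivative^[k] (X ^ n * (1 - X) ^ n : ℝ[X])).IsRoot 0 :=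
    fun k hk ↦ isRoot_iterate_derivative_of_pow_dvd (by simp) hk
  have h1 : ∀ k < n, (derivative^[k] (X ^ n * (1 - X) ^ n : ℝ[X])).IsRoot 1 := by
    refine fun k hk ↦ isRoot_iterate_derivative_of_pow_dvd (Dvd.dvd.mul_left ?_ _) hk
    exact pow_dvd_pow_of_dvd ⟨-1, by simp⟩ n
  rw [legendre_eq_rodrigues, map_smul, LinearMap.smul_apply, l2Inner_apply,
    integral_iterate_derivative_mul_eq h0 h1, iterate_derivative_eq_zero_of_degree_lt hf]
  simp

theorem l2Inner_legendre_legendre_of_ne {m n : ℕ} (h : m ≠ n) :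
    l2Inner (legendre m) (legendre n) = 0 := by
  rcases h.lt_or_gt with h | h
  · rw [l2Inner_comm]
    exact l2Inner_legendre_of_degree_lt (by rw [degree_legendre]; exact_mod_cast h)
  · exact l2Inner_legendre_of_degree_lt (by rw [degree_legendre]; exact_mod_cast h)

-- Integrate `(x Pₙ²)'`: as `x Pₙ' - n Pₙ` has degree `< n`, `⟪Pₙ, x Pₙ'⟫ = n ‖Pₙ‖²`, hence
-- `(2n + 1) ‖Pₙ‖² = Pₙ(1)² = 1`.
theorem l2Inner_legendre_self (n : ℕ) :
    l2Inner (legendre n) (legendre n) = (2 * n + 1 : ℝ)⁻¹ := by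
  have hEuler : l2Inner (legendre n) (X * derivative (legendre n)) =
      n * l2Inner (legendre n) (legendre n) := by
    have h := l2Inner_legendre_of_degree_lt
      (degree_X_mul_derivative_sub_lt (natDegree_legendre n).le)
    rwa [map_sub, ← smul_eq_C_mul, map_smul, smul_eq_mul, sub_eq_zero] at h
  have hparts := l2Inner_derivative_left (X * legendre n) (legendre n)
  rw [derivative_mul, derivative_X, one_mul, map_add, LinearMap.add_apply,
    l2Inner_comm (X * _), l2Inner_mul_left_eq_mul_right X, hEuler] at hparts
  simp only [eval_mul, eval_X, legendre_eval_one, zero_mul, sub_zero, one_mul, ← mul_pow,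
    mul_neg_one, neg_neg, one_pow] at hparts
  apply eq_inv_of_mul_eq_one_left
  linear_combination hparts

theorem l2Inner_derivative_legendre {m n : ℕ} (hmn : m ≤ n) :
    l2Inner (derivative (legendre n)) (derivative (legendre m)) =
      ((-1) ^ (n + m) + 1) * (m * (m + 1)) := by
  have hdeg : (derivative (derivative (legendre m))).degree < n :=
    (degree_derivative_le.trans_lt (degree_derivative_lt (legendre_ne_zero m))).trans_le
      (by rw [degree_legendre]; exact_mod_cast hmn)
  rw [l2Inner_derivative_left, l2Inner_legendre_of_degree_lt hdeg, legendre_eval_one,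
    legendre_eval_zero, derivative_legendre_eval_one, derivative_legendre_eval_zero]
  ring

theorem abs_l2Inner_derivative_legendre_le {m n r : ℕ} (hm : m ≤ r) (hn : n ≤ r) :
    |l2Inner (derivative (legendre n)) (derivative (legendre m))| ≤ 2 * (r * (r + 1)) := by
  wlog hmn : m ≤ n generalizing m n
  · rw [l2Inner_comm]
    exact this hn hm (by omega)
  rw [l2Inner_derivative_legendre hmn, abs_mul,
    abs_of_nonneg (by positivity : (0 : ℝ) ≤ m * (m + 1))]
  have hsign : |(-1 : ℝ) ^ (n + m) + 1| ≤ 2 := by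
    rcases neg_one_pow_eq_or ℝ (n + m) with h | h <;> norm_num [h]
  have hmr : (m : ℝ) * (m + 1) ≤ r * (r + 1) := by
    have : (m : ℝ) ≤ r := by exact_mod_cast hm
    gcongr
  exact mul_le_mul hsign hmr (by positivity) (by norm_num)

theorem exists_eq_sum_legendre {p : ℝ[X]} {r : ℕ} (hp : p.natDegree ≤ r) :
    ∃ a : ℕ → ℝ, p = ∑ n ∈ range (r + 1), a n • legendre n := by
  let S : Sequence ℝ := ⟨legendre, degree_legendre⟩
  have hmem : p ∈ Submodule.span ℝ (S '' ↑(range (r + 1))) := by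
    have hunit : ∀ i < r + 1, IsUnit (S i).leadingCoeff :=
      fun i _ ↦ (leadingCoeff_ne_zero.mpr (legendre_ne_zero i)).isUnit
    rw [coe_range, S.span_degreeLT hunit, mem_degreeLT]
    exact (degree_le_of_natDegree_le hp).trans_lt (by exact_mod_cast r.lt_succ_self)
  obtain ⟨a, ha⟩ := (Submodule.mem_span_image_finset_iff_exists_fun' ℝ).mp hmem
  exact ⟨a, ha.symm⟩

theorem l2Inner_sum_legendre_self (s : Finset ℕ) (a : ℕ → ℝ) :
    l2Inner (∑ n ∈ s, a n • legendre n) (∑ n ∈ s, a n • legendre n) =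
      ∑ n ∈ s, a n ^ 2 / (2 * n + 1) := by
  rw [l2Inner_sum_smul_sum_smul]
  refine sum_congr rfl fun n hn ↦ ?_
  rw [sum_eq_single n (fun m _ hmn ↦ by rw [l2Inner_legendre_legendre_of_ne hmn.symm, mul_zero])
    (fun h ↦ absurd hn h), l2Inner_legendre_self]
  ring

theorem l2Inner_derivative_self_le {p : ℝ[X]} {r : ℕ} (hp : p.natDegree ≤ r) :
    l2Inner (derivative p) (derivative p) ≤
      2 * r * (r + 1) ^ 2 * (2 * r + 1) * l2Inner p p := by
  obtain ⟨a, rfl⟩ := exists_eq_sum_legendre hp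
  have hcoeff : ∑ n ∈ range (r + 1), a n ^ 2 ≤
      (2 * r + 1) * ∑ n ∈ range (r + 1), a n ^ 2 / (2 * n + 1) := by
    rw [mul_sum]
    refine sum_le_sum fun n hn ↦ ?_
    have : (n : ℝ) ≤ r := by exact_mod_cast Nat.lt_succ_iff.mp (mem_range.mp hn)
    rw [mul_div_assoc', le_div_iff₀ (by positivity)]
    nlinarith [sq_nonneg (a n)]
  have hD : derivative (∑ n ∈ range (r + 1), a n • legendre n) =
      ∑ n ∈ range (r + 1), a n • derivative (legendre n) := by
    simp only [map_sum, map_smul]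
  rw [hD, l2Inner_sum_smul_sum_smul, l2Inner_sum_legendre_self]
  calc ∑ n ∈ range (r + 1), ∑ m ∈ range (r + 1),
        a n * a m * l2Inner (derivative (legendre n)) (derivative (legendre m))
      ≤ ∑ n ∈ range (r + 1), ∑ m ∈ range (r + 1), |a n| * |a m| * (2 * (r * (r + 1))) := by
        refine sum_le_sum fun n hn ↦ sum_le_sum fun m hm ↦ (le_abs_self _).trans ?_
        rw [abs_mul, abs_mul]
        exact mul_le_mul_of_nonneg_left (abs_l2Inner_derivative_legendre_le
          (Nat.lt_succ_iff.mp (mem_range.mp hm)) (Nat.lt_succ_iff.mp (mem_range.mp hn)))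
          (by positivity)
    _ = 2 * (r * (r + 1)) * (∑ n ∈ range (r + 1), |a n|) ^ 2 := by
        rw [sq, sum_mul_sum, mul_sum]
        exact sum_congr rfl fun _ _ ↦ by rw [mul_sum]; exact sum_congr rfl fun _ _ ↦ by ring
    _ ≤ 2 * (r * (r + 1)) * ((r + 1) * ∑ n ∈ range (r + 1), a n ^ 2) := by
        gcongr
        simpa using sq_sum_le_card_mul_sum_sq (s := range (r + 1)) (f := fun n ↦ |a n|)
    _ ≤ 2 * (r * (r + 1)) * ((r + 1) *
          ((2 * r + 1) * ∑ n ∈ range (r + 1), a n ^ 2 / (2 * n + 1))) := by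
        gcongr
    _ = _ := by ring

theorem mul_l2Inner_comp_C_mul_X (p q : ℝ[X]) (h : ℝ) :
    h * l2Inner (p.comp (C h * X)) (q.comp (C h * X)) =
      ∫ x in (0 : ℝ)..h, p.eval x * q.eval x := by
  have := smul_integral_comp_mul_left (fun x ↦ p.eval x * q.eval x) h (a := 0) (b := 1)
  simpa [l2Inner_apply, eval_comp] using this

theorem integral_derivative_sq_le {v : ℝ[X]} {r : ℕ} (hv : v.natDegree ≤ r) {h : ℝ}
    (hh : 0 < h) :
    ∫ x in (0 : ℝ)..h, (derivative v).eval x ^ 2 ≤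
      2 * r * (r + 1) ^ 2 * (2 * r + 1) / h ^ 2 * ∫ x in (0 : ℝ)..h, v.eval x ^ 2 := by
  set u := v.comp (C h * X)
  have hu : u.natDegree ≤ r := natDegree_comp_le.trans (by
    rw [natDegree_C_mul_X h hh.ne', mul_one]; exact hv)
  have hdu : derivative u = C h * (derivative v).comp (C h * X) := by
    rw [derivative_comp, derivative_C_mul_X]
  have hcore := l2Inner_derivative_self_le hu
  rw [hdu, ← smul_eq_C_mul] at hcore
  simp only [map_smul, LinearMap.smul_apply, smul_eq_mul] at hcore
  simp only [sq]
  rw [← mul_l2Inner_comp_C_mul_X, ← mul_l2Inner_comp_C_mul_X, div_mul_eq_mul_div,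
    le_div_iff₀ (by positivity)]
  linear_combination h * hcore

end Polynomial

theorem hp_inverse_inequality_1d :
    ∃ C : ℝ, 0 < C ∧
      ∀ (r : ℕ) (h : ℝ), 0 < h → ∀ v : Polynomial ℝ, v.natDegree ≤ r →
        Real.sqrt (∫ x in (0 : ℝ)..h, ((Polynomial.derivative v).eval x) ^ 2) ≤
          C * (r : ℝ) ^ 2 / h * Real.sqrt (∫ x in (0 : ℝ)..h, (v.eval x) ^ 2) := by
  refine ⟨5, by norm_num, fun r h hh v hv ↦ ?_⟩
  have hK : 2 * r * (r + 1) ^ 2 * (2 * r + 1) / h ^ 2 ≤ (5 * (r : ℝ) ^ 2 / h) ^ 2 := by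
    rw [div_pow, div_le_div_iff_of_pos_right (by positivity)]
    rcases r with _ | s
    · simp
    -- `25 (s + 1)⁴ - 2 (s + 1) (s + 2)² (2s + 3)` expands to the positive polynomial below.
    · have : (0 : ℝ) ≤ 21 * s ^ 4 + 74 * s ^ 3 + 88 * s ^ 2 + 36 * s + 1 := by positivity
      push_cast
      linarith
  have hv2 : 0 ≤ ∫ x in (0 : ℝ)..h, v.eval x ^ 2 :=
    integral_nonneg hh.le fun x _ ↦ sq_nonneg _
  calc √(∫ x in (0 : ℝ)..h, (derivative v).eval x ^ 2)
      ≤ √((5 * (r : ℝ) ^ 2 / h) ^ 2 * ∫ x in (0 : ℝ)..h, v.eval x ^ 2) :=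
        Real.sqrt_le_sqrt ((integral_derivative_sq_le hv hh).trans
          (mul_le_mul_of_nonneg_right hK hv2))
    _ = 5 * (r : ℝ) ^ 2 / h * √(∫ x in (0 : ℝ)..h, v.eval x ^ 2) := by
        rw [Real.sqrt_mul (sq_nonneg _), Real.sqrt_sq (by positivity)]
end
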